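/- arXiv:1405.1339 — 4 statements merged into one kernel-verified Lean document; each statement's English description precedes it below -/
import Mathlib

section
/- Fix p_A ∈ (0,1) and cf₁ ∈ (0,1) with cf₁ > p_A. For p_X in an interval where p_A − p_X cf₁ > 0 and 1 − p_X − p_A + p_X cf₁ > 0, the function f(p_X) = p_X cf₁ ln(p_X cf₁) + p_X(1−cf₁)ln(p_X(1−cf₁)) + (p_A − p_X cf₁)ln(p_A − p_X cf₁) + (1 − p_X − p_A + p_X cf₁)ln(1 − p_X − p_A + p_X cf₁) − p_X ln p_X − (1−p_X)ln(1−p_X) is strictly increasing in p_X. -/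
/-!
Along the line `P(XA) = c · P(X)` the four cell probabilities of the contingency table are
`x c`, `x (1 - c)`, `a = pA - x c` and `b = 1 - x - pA + x c`, all affine in `x = P(X)`, so the
derivative of the mutual information is a combination of logarithms:
`log (a + b) - (c log (a / c) + (1 - c) log (b / (1 - c)))`.
By strict concavity of `log` this is positive unless `a / c = b / (1 - c)`, and
`a (1 - c) - b c = pA - c` vanishes only on the independence line `c = pA`.
-/

open Real Set

lemma mul_log_div_add_mul_log_div_lt_log_add {a b c : ℝ} (ha : 0 < a) (hb : 0 < b)
    (hc : c ∈ Ioo 0 1) (hne : a * (1 - c) ≠ b * c) :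
    c * log (a / c) + (1 - c) * log (b / (1 - c)) < log (a + b) := by
  obtain ⟨hc0, hc1⟩ := hc
  have hc1' : 0 < 1 - c := sub_pos.mpr hc1
  have hpoints : a / c ≠ b / (1 - c) := by
    rwa [ne_eq, div_eq_div_iff hc0.ne' hc1'.ne']
  have hmean : c * (a / c) + (1 - c) * (b / (1 - c)) = a + b := by
    field_simp
  simpa only [smul_eq_mul, hmean] using
    strictConcaveOn_log_Ioi.2 (div_pos ha hc0) (div_pos hb hc1') hpoints hc0 hc1' (by ring)

lemma HasDerivAt.mul_log {g : ℝ → ℝ} {g' x : ℝ} (hg : HasDerivAt g g' x) (hx : g x ≠ 0) :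
    HasDerivAt (fun y => g y * Real.log (g y)) ((Real.log (g x) + 1) * g') x :=
  (hasDerivAt_mul_log hx).comp x hg

section ConfidenceLine

variable {pA c : ℝ}

def confidenceLineDomain (pA c : ℝ) : Set ℝ :=
  {x : ℝ | 0 < x ∧ x < 1 ∧ 0 < pA - x * c ∧ 0 < 1 - x - pA + x * c}

noncomputable def confidenceLineMI (pA c x : ℝ) : ℝ :=
  x * c * log (x * c) + x * (1 - c) * log (x * (1 - c)) + (pA - x * c) * log (pA - x * c) +
    (1 - x - pA + x * c) * log (1 - x - pA + x * c) - x * log x - (1 - x) * log (1 - x)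

lemma convex_confidenceLineDomain (hc : c ∈ Ioo 0 1) : Convex ℝ (confidenceLineDomain pA c) := by
  rw [convex_iff_ordConnected]
  refine ⟨fun p ⟨hp0, hp1, hpa, hpb⟩ q ⟨hq0, hq1, hqa, hqb⟩ z ⟨hpz, hzq⟩ =>
    ⟨by linarith, by linarith, ?_, ?_⟩⟩
  · nlinarith [mul_le_mul_of_nonneg_right hzq hc.1.le]
  · nlinarith [mul_le_mul_of_nonneg_right hzq (sub_nonneg.mpr hc.2.le)]

lemma hasDerivAt_confidenceLineMI (hc : c ∈ Ioo 0 1) {x : ℝ}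
    (hx : x ∈ confidenceLineDomain pA c) :
    HasDerivAt (confidenceLineMI pA c)
      (log ((pA - x * c) + (1 - x - pA + x * c)) -
        (c * log ((pA - x * c) / c) + (1 - c) * log ((1 - x - pA + x * c) / (1 - c)))) x := by
  obtain ⟨hx0, hx1, ha, hb⟩ := hx
  obtain ⟨hc0, hc1⟩ := hc
  have hc1' : 0 < 1 - c := sub_pos.mpr hc1
  have hx1' : 0 < 1 - x := sub_pos.mpr hx1
  have hmul (k : ℝ) : HasDerivAt (fun p : ℝ => p * k) k x := hasDerivAt_mul_const k
  have hlin : HasDerivAt (fun p : ℝ => 1 - p) (-1) x := (hasDerivAt_id x).const_sub 1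
  have hXA := (hmul c).mul_log (mul_pos hx0 hc0).ne'
  have hXnA := (hmul (1 - c)).mul_log (mul_pos hx0 hc1').ne'
  have hnXA := ((hmul c).const_sub pA).mul_log ha.ne'
  have hb' : HasDerivAt (fun p : ℝ => 1 - p - pA + p * c) (-1 + c) x :=
    (hlin.sub_const pA).add (hmul c)
  have hnXnA := hb'.mul_log hb.ne'
  have hX := hasDerivAt_mul_log hx0.ne'
  have hnX := hlin.mul_log hx1'.ne'
  refine (((((hXA.add hXnA).add hnXA).add hnXnA).sub hX).sub hnX).congr_deriv ?_
  rw [log_mul hx0.ne' hc0.ne', log_mul hx0.ne' hc1'.ne', log_div ha.ne' hc0.ne',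
    log_div hb.ne' hc1'.ne']
  ring_nf

lemma confidenceLineMI_deriv_pos (hc : c ∈ Ioo 0 1) (hgt : pA < c) {x : ℝ}
    (hx : x ∈ confidenceLineDomain pA c) :
    0 < log ((pA - x * c) + (1 - x - pA + x * c)) -
        (c * log ((pA - x * c) / c) + (1 - c) * log ((1 - x - pA + x * c) / (1 - c))) := by
  obtain ⟨-, -, ha, hb⟩ := hx
  refine sub_pos.2 (mul_log_div_add_mul_log_div_lt_log_add ha hb hc fun h => ?_)
  linarith

end ConfidenceLine

theorem mi_confidence_line_increasing_general (pA cf₁ : ℝ)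
    (hcf : cf₁ ∈ Set.Ioo (0:ℝ) 1) (hgt : pA < cf₁) :
    StrictMonoOn
      (fun pX : ℝ =>
        pX * cf₁ * Real.log (pX * cf₁) +
        pX * (1 - cf₁) * Real.log (pX * (1 - cf₁)) +
        (pA - pX * cf₁) * Real.log (pA - pX * cf₁) +
        (1 - pX - pA + pX * cf₁) * Real.log (1 - pX - pA + pX * cf₁) -
        pX * Real.log pX - (1 - pX) * Real.log (1 - pX))
      {pX : ℝ | 0 < pX ∧ pX < 1 ∧ 0 < pA - pX * cf₁ ∧ 0 < 1 - pX - pA + pX * cf₁} :=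
  strictMonoOn_of_hasDerivWithinAt_pos (convex_confidenceLineDomain hcf)
    (fun _ hx => (hasDerivAt_confidenceLineMI hcf hx).continuousAt.continuousWithinAt)
    (fun _ hx => (hasDerivAt_confidenceLineMI hcf (interior_subset hx)).hasDerivWithinAt)
    (fun _ hx => confidenceLineMI_deriv_pos hcf hgt (interior_subset hx))

theorem mi_confidence_line_increasing (pA cf₁ : ℝ)
    (hA : pA ∈ Set.Ioo (0:ℝ) 1) (hcf : cf₁ ∈ Set.Ioo (0:ℝ) 1) (hgt : pA < cf₁) :
    StrictMonoOn
      (fun pX : ℝ =>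
        pX * cf₁ * Real.log (pX * cf₁) +
        pX * (1 - cf₁) * Real.log (pX * (1 - cf₁)) +
        (pA - pX * cf₁) * Real.log (pA - pX * cf₁) +
        (1 - pX - pA + pX * cf₁) * Real.log (1 - pX - pA + pX * cf₁) -
        pX * Real.log pX - (1 - pX) * Real.log (1 - pX))
      {pX : ℝ | 0 < pX ∧ pX < 1 ∧ 0 < pA - pX * cf₁ ∧ 0 < 1 - pX - pA + pX * cf₁} :=
  mi_confidence_line_increasing_general pA cf₁ hcf hgt
end

section
/- Fix p_A ∈ (0,1) and cf₂ ∈ (0,1) with cf₂ > p_A. For p_X in an interval where p_A − cf₂(1−p_X) > 0 and p_X(1−cf₂) − p_A + cf₂ > 0, the function f(p_X) = (p_A − cf₂(1−p_X))ln(p_A − cf₂(1−p_X)) + (p_X(1−cf₂) − p_A + cf₂)ln(p_X(1−cf₂) − p_A + cf₂) + cf₂(1−p_X)ln cf₂ + (1−p_X)(1−cf₂)ln(1−cf₂) − p_X ln p_X is strictly decreasing in p_X. -/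
/-!
Writing `a = p_A - cf₂(1 - p_X)` and `b = p_X(1 - cf₂) - p_A + cf₂`, so that `a + b = p_X`,
the derivative of `f` is `cf₂ log (a / cf₂) + (1 - cf₂) log (b / (1 - cf₂)) - log (a + b)`.
Since `cf₂ · (a / cf₂) + (1 - cf₂) · (b / (1 - cf₂)) = a + b`, strict concavity of `log` makes
this negative as soon as `a / cf₂ ≠ b / (1 - cf₂)`, and `a (1 - cf₂) - b cf₂ = p_A - cf₂ ≠ 0`.
-/

open Real

theorem weighted_log_sub_entropy_lt_log_add {w a b : ℝ} (hw₀ : 0 < w) (hw₁ : w < 1)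
    (ha : 0 < a) (hb : 0 < b) (hne : a * (1 - w) ≠ b * w) :
    w * log a + (1 - w) * log b - w * log w - (1 - w) * log (1 - w) < log (a + b) := by
  have hw₁' : 0 < 1 - w := sub_pos.2 hw₁
  have hne' : a / w ≠ b / (1 - w) := by
    rwa [Ne, div_eq_div_iff hw₀.ne' hw₁'.ne']
  have h := strictConcaveOn_log_Ioi.2 (Set.mem_Ioi.2 (div_pos ha hw₀))
    (Set.mem_Ioi.2 (div_pos hb hw₁')) hne' hw₀ hw₁' (add_sub_cancel w 1)
  simp only [smul_eq_mul, mul_div_cancel₀ _ hw₀.ne', mul_div_cancel₀ _ hw₁'.ne',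
    log_div ha.ne' hw₀.ne', log_div hb.ne' hw₁'.ne'] at h
  linarith

noncomputable def negConfidenceLineMI (pA cf₂ pX : ℝ) : ℝ :=
  (pA - cf₂ * (1 - pX)) * log (pA - cf₂ * (1 - pX)) +
    (pX * (1 - cf₂) - pA + cf₂) * log (pX * (1 - cf₂) - pA + cf₂) +
    cf₂ * (1 - pX) * log cf₂ +
    (1 - pX) * (1 - cf₂) * log (1 - cf₂) -
    pX * log pX

theorem hasDerivAt_negConfidenceLineMI {pA cf₂ x : ℝ} (hx : 0 < x)
    (ha : 0 < pA - cf₂ * (1 - x)) (hb : 0 < x * (1 - cf₂) - pA + cf₂) :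
    HasDerivAt (negConfidenceLineMI pA cf₂)
      (cf₂ * log (pA - cf₂ * (1 - x)) + (1 - cf₂) * log (x * (1 - cf₂) - pA + cf₂)
        - cf₂ * log cf₂ - (1 - cf₂) * log (1 - cf₂) - log x) x := by
  have hA : HasDerivAt (fun p => pA - cf₂ * (1 - p)) cf₂ x := by
    simpa using ((hasDerivAt_id x).const_sub 1 |>.const_mul cf₂).const_sub pA
  have hB : HasDerivAt (fun p => p * (1 - cf₂) - pA + cf₂) (1 - cf₂) x := by
    simpa using (((hasDerivAt_id x).mul_const (1 - cf₂)).sub_const pA).add_const cf₂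
  have hC : HasDerivAt (fun p : ℝ => 1 - p) (-1) x := by
    simpa using (hasDerivAt_id x).const_sub 1
  refine (((((hasDerivAt_mul_log ha.ne').comp x hA).add
    ((hasDerivAt_mul_log hb.ne').comp x hB)).add
    ((hC.const_mul cf₂).mul_const (log cf₂))).add
    ((hC.mul_const (1 - cf₂)).mul_const (log (1 - cf₂)))).sub (hasDerivAt_mul_log hx.ne')
    |>.congr_deriv (by ring)

theorem mi_neg_confidence_line_decreasing_general (pA cf₂ : ℝ)
    (hcf : cf₂ ∈ Set.Ioo (0:ℝ) 1) (hgt : pA < cf₂) :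
    StrictAntiOn
      (fun pX : ℝ =>
        (pA - cf₂ * (1 - pX)) * Real.log (pA - cf₂ * (1 - pX)) +
        (pX * (1 - cf₂) - pA + cf₂) * Real.log (pX * (1 - cf₂) - pA + cf₂) +
        cf₂ * (1 - pX) * Real.log cf₂ +
        (1 - pX) * (1 - cf₂) * Real.log (1 - cf₂) -
        pX * Real.log pX)
      {pX : ℝ | 0 < pX ∧ pX < 1 ∧ 0 < pA - cf₂ * (1 - pX) ∧
        0 < pX * (1 - cf₂) - pA + cf₂} := by
  obtain ⟨hc₀, hc₁⟩ := hcf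
  change StrictAntiOn (negConfidenceLineMI pA cf₂) _
  set D := {pX : ℝ | 0 < pX ∧ pX < 1 ∧ 0 < pA - cf₂ * (1 - pX) ∧
    0 < pX * (1 - cf₂) - pA + cf₂}
  have hD : D.OrdConnected := ⟨fun x ⟨hx₀, _, hxa, hxb⟩ y ⟨_, hy₁, _, _⟩ z ⟨hxz, hzy⟩ => by
    refine ⟨hx₀.trans_le hxz, hzy.trans_lt hy₁, ?_, ?_⟩ <;> nlinarith⟩
  have hderiv : ∀ x ∈ D, HasDerivAt (negConfidenceLineMI pA cf₂) _ x :=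
    fun x ⟨hx₀, _, ha, hb⟩ => hasDerivAt_negConfidenceLineMI hx₀ ha hb
  refine strictAntiOn_of_hasDerivWithinAt_neg hD.convex
    (fun x hx => (hderiv x hx).continuousAt.continuousWithinAt)
    (fun x hx => (hderiv x (interior_subset hx)).hasDerivWithinAt) fun x hx => ?_
  obtain ⟨-, -, ha, hb⟩ := interior_subset hx
  have hne : (pA - cf₂ * (1 - x)) * (1 - cf₂) - (x * (1 - cf₂) - pA + cf₂) * cf₂ = pA - cf₂ := by
    ring
  have hlt := weighted_log_sub_entropy_lt_log_add hc₀ hc₁ ha hb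
    (sub_ne_zero.1 (hne ▸ sub_ne_zero.2 hgt.ne))
  rw [show pA - cf₂ * (1 - x) + (x * (1 - cf₂) - pA + cf₂) = x by ring] at hlt
  linarith

theorem mi_neg_confidence_line_decreasing (pA cf₂ : ℝ)
    (hA : pA ∈ Set.Ioo (0:ℝ) 1) (hcf : cf₂ ∈ Set.Ioo (0:ℝ) 1) (hgt : pA < cf₂) :
    StrictAntiOn
      (fun pX : ℝ =>
        (pA - cf₂ * (1 - pX)) * Real.log (pA - cf₂ * (1 - pX)) +
        (pX * (1 - cf₂) - pA + cf₂) * Real.log (pX * (1 - cf₂) - pA + cf₂) +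
        cf₂ * (1 - pX) * Real.log cf₂ +
        (1 - pX) * (1 - cf₂) * Real.log (1 - cf₂) -
        pX * Real.log pX)
      {pX : ℝ | 0 < pX ∧ pX < 1 ∧ 0 < pA - cf₂ * (1 - pX) ∧
        0 < pX * (1 - cf₂) - pA + cf₂} :=
  mi_neg_confidence_line_decreasing_general pA cf₂ hcf hgt
end

section
/- Let p_A ∈ (0,1) and consider the function F(p_X, p_{XA}) = (p_{XA} − p_X p_A)²/(p_X(1−p_X)) defined on the region D = { (p_X, p_{XA}) : 0 < p_X < 1, p_X·p_A ≤ p_{XA} ≤ min(p_X, p_A) } (positive dependence region). Then for any fixed c ∈ (0, p_A], F(p_X, p_{XA}) ≤ F(c, c) = c(1−p_A)²/(1−c) for all (p_X, p_{XA}) ∈ D with p_{XA} ≤ c. -/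
/-!
For fixed `p_X` the value `F(p_X, p_XA)` grows with `p_XA` on the positive region, so it is
maximised at `p_XA = min(p_X, c)`. On the diagonal `F(x, x) = x (1 - p_A)² / (1 - x)`, which
grows with `x`; this settles `p_X ≤ c`. For `p_X ≥ c` the bound for `F(p_X, c)` is, after
clearing denominators, the nonnegativity of a quadratic in `p_X` that vanishes at `p_X = c`
and whose other factor is nonnegative up to `p_X = c / p_A`, the largest `p_X` with
`p_X p_A ≤ c`.
-/

namespace ChiSq

/-- The function `F(p_X, p_XA)`, with `p_A` as a parameter. -/
noncomputable def chiSq (pA pX pXA : ℝ) : ℝ :=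
  (pXA - pX * pA) ^ 2 / (pX * (1 - pX))

variable {pA : ℝ}

lemma chiSq_le_chiSq_of_le {pX a b : ℝ} (hX0 : 0 ≤ pX) (hX1 : pX ≤ 1) (ha : pX * pA ≤ a)
    (hab : a ≤ b) : chiSq pA pX a ≤ chiSq pA pX b := by
  unfold chiSq
  gcongr

lemma chiSq_self {x : ℝ} (hx : x ≠ 0) : chiSq pA x x = x * (1 - pA) ^ 2 / (1 - x) := by
  unfold chiSq
  rw [← mul_one_sub, mul_pow, sq, mul_assoc, mul_div_mul_left _ _ hx]

lemma chiSq_self_le_chiSq_self {x y : ℝ} (hx : 0 < x) (hxy : x ≤ y) (hy : y < 1) :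
    chiSq pA x x ≤ chiSq pA y y := by
  rw [chiSq_self hx.ne', chiSq_self (hx.trans_le hxy).ne', div_le_div_iff₀ (by linarith)
    (by linarith)]
  have : x * (1 - y) ≤ y * (1 - x) := by nlinarith
  nlinarith [mul_le_mul_of_nonneg_right this (sq_nonneg (1 - pA))]

lemma chiSq_le_chiSq_self {c x : ℝ} (hpA : 0 < pA) (hc : 0 < c) (hcpA : c ≤ pA) (hpA1 : pA < 1)
    (hcx : c ≤ x) (hxc : x * pA ≤ c) (hx1 : x < 1) :
    chiSq pA x c ≤ chiSq pA c c := by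
  rw [chiSq_self hc.ne', chiSq, div_le_div_iff₀ (by nlinarith) (by linarith)]
  -- `-k` is the leading coefficient of the quadratic in `x` below, which has the root `x = c`.
  set k := c * (1 - pA) ^ 2 + pA ^ 2 * (1 - c)
  have key : c * (1 - pA) ^ 2 * (x * (1 - x)) - (c - x * pA) ^ 2 * (1 - c)
      = (x - c) * (c * (1 - c) - k * x) := by ring
  have hk : 0 ≤ k := by have := sub_nonneg.2 (hcpA.trans hpA1.le); positivity
  have hfactor : 0 ≤ c * (1 - c) - k * x := by
    have : c * (pA - c) * (1 - pA) ≤ pA * (c * (1 - c) - k * x) := by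
      nlinarith [mul_le_mul_of_nonneg_left hxc hk]
    have : 0 ≤ c * (pA - c) * (1 - pA) := by
      have := sub_nonneg.2 hcpA; have := sub_nonneg.2 hpA1.le; positivity
    nlinarith
  nlinarith [mul_nonneg (sub_nonneg.2 hcx) hfactor]

end ChiSq

open ChiSq in
theorem chi_sq_positive_upper_bound_general (pA : ℝ) (hA : pA ∈ Set.Ioo (0:ℝ) 1)
    (c : ℝ) (hcA : c ≤ pA)
    (pX pXA : ℝ) (hX0 : 0 < pX) (hX1 : pX < 1)
    (hlo : pX * pA ≤ pXA) (hhi : pXA ≤ min pX pA) (hbound : pXA ≤ c) :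
    (pXA - pX * pA) ^ 2 / (pX * (1 - pX)) ≤ c * (1 - pA) ^ 2 / (1 - c) := by
  obtain ⟨hA0, hA1⟩ := hA
  have hc : 0 < c := by nlinarith
  rw [← chiSq_self hc.ne']
  change chiSq pA pX pXA ≤ chiSq pA c c
  rcases le_total pX c with hXc | hcX
  · calc chiSq pA pX pXA ≤ chiSq pA pX pX :=
          chiSq_le_chiSq_of_le hX0.le hX1.le hlo (hhi.trans (min_le_left _ _))
      _ ≤ chiSq pA c c := chiSq_self_le_chiSq_self hX0 hXc (hcA.trans_lt hA1)
  · calc chiSq pA pX pXA ≤ chiSq pA pX c := chiSq_le_chiSq_of_le hX0.le hX1.le hlo hbound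
      _ ≤ chiSq pA c c := chiSq_le_chiSq_self hA0 hc hcA hA1 hcX (hlo.trans hbound) hX1

theorem chi_sq_positive_upper_bound (pA : ℝ) (hA : pA ∈ Set.Ioo (0:ℝ) 1)
    (c : ℝ) (hc : 0 < c) (hcA : c ≤ pA)
    (pX pXA : ℝ) (hX0 : 0 < pX) (hX1 : pX < 1)
    (hlo : pX * pA ≤ pXA) (hhi : pXA ≤ min pX pA) (hbound : pXA ≤ c) :
    (pXA - pX * pA) ^ 2 / (pX * (1 - pX)) ≤ c * (1 - pA) ^ 2 / (1 - c) :=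
  chi_sq_positive_upper_bound_general pA hA c hcA pX pXA hX0 hX1 hlo hhi hbound
end

section
/- Let p_A ∈ (0,1) and F(p_X, p_{XA}) = (p_{XA} − p_X p_A)²/(p_X(1−p_X)) on the negative dependence region D' = { (p_X, p_{XA}) : 0 < p_X < 1, max(0, p_X − (1−p_A)) ≤ p_{XA} ≤ p_X·p_A }. Then for any fixed a ∈ (0, 1) with a ≤ p_X and b = p_{XA} such that the constraint region D'' = { (q_X, q_{XA}) ∈ D' : q_{XA} ≤ b, q_X ≤ q_{XA} + (a − b) } is considered, F attains its maximum over D'' at the point (a − b, 0), i.e., F(q_X, q_{XA}) ≤ F(a−b, 0) = (a−b)p_A²/(1−(a−b)) for all (q_X, q_{XA}) ∈ D''. -/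
/-!
Write `c = a - b` and `t = qX * pA - qXA ≥ 0`, so that the objective is `t ^ 2 / (qX * (1 - qX))`.
The constraints bound `t` by `qX * pA` (as `qXA ≥ 0`) and by `c - qX * (1 - pA)` (as `qX ≤ qXA + c`).
For `qX ≤ c` the first bound gives `pA ^ 2 * qX / (1 - qX)`, which increases with `qX`; for `qX ≥ c`
the second bound gives a function of `qX` that decreases on the feasible range. Both meet the value
`c * pA ^ 2 / (1 - c)` at `qX = c`, i.e. at the point `(a - b, 0)`.
-/

lemma div_one_sub_le_div_one_sub {x y : ℝ} (hxy : x ≤ y) (hy : y < 1) :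
    x / (1 - x) ≤ y / (1 - y) := by
  rw [div_le_div_iff₀ (by linarith) (by linarith)]
  nlinarith

lemma sq_sub_mul_one_sub_div_le {p c x : ℝ} (hp : 0 ≤ p) (hc0 : 0 < c) (hcp : c ≤ 1 - p)
    (hcx : c ≤ x) (hx1 : x < 1) (hxc : x * (1 - p) ≤ c) :
    (c - x * (1 - p)) ^ 2 / (x * (1 - x)) ≤ c * p ^ 2 / (1 - c) := by
  rw [div_le_div_iff₀ (mul_pos (by linarith) (by linarith)) (by linarith)]
  set K := (1 - p) ^ 2 * (1 - c) + c * p ^ 2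
  have hK : 0 ≤ K := by
    have : 0 ≤ 1 - c := by linarith
    positivity
  have hslope : 0 ≤ c * (1 - c) - K * x := by
    have hscaled :
        (1 - p) * (c * (1 - c) - K * x) = K * (c - x * (1 - p)) + c * p * (1 - p - c) := by
      ring
    refine (mul_nonneg_iff_of_pos_left (by linarith : 0 < 1 - p)).mp ?_
    rw [hscaled]
    have : 0 ≤ 1 - p - c := by linarith
    have : 0 ≤ c - x * (1 - p) := by linarith
    positivity
  -- `x = c` is a root of the gap; the cofactor is `hslope`
  have hfactor : c * p ^ 2 * (x * (1 - x)) - (c - x * (1 - p)) ^ 2 * (1 - c) =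
      (x - c) * (c * (1 - c) - K * x) := by
    ring
  nlinarith [mul_nonneg (sub_nonneg.2 hcx) hslope]

theorem chi_sq_negative_upper_bound_general (pA : ℝ) (hA : pA ∈ Set.Ioo (0:ℝ) 1)
    (a b : ℝ) (ha : a ∈ Set.Ioo (0:ℝ) 1)
    (hneg : b ≤ a * pA) (hfeas : max 0 (a - (1 - pA)) ≤ b)
    (qX qXA : ℝ) (hq0 : 0 < qX) (hq1 : qX < 1)
    (hqlo : max 0 (qX - (1 - pA)) ≤ qXA) (hqhi : qXA ≤ qX * pA)
    (hqline : qX ≤ qXA + (a - b)) :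
    (qXA - qX * pA) ^ 2 / (qX * (1 - qX)) ≤ (a - b) * pA ^ 2 / (1 - (a - b)) := by
  obtain ⟨hpA0, hpA1⟩ := hA
  have hqXA0 : 0 ≤ qXA := (le_max_left _ _).trans hqlo
  have hc0 : 0 < a - b := calc
    0 < a * (1 - pA) := mul_pos ha.1 (sub_pos.2 hpA1)
    _ ≤ a - b := by linarith
  have hc1 : a - b ≤ 1 - pA := by linarith [(le_max_right _ _).trans hfeas]
  have hden : 0 < qX * (1 - qX) := mul_pos hq0 (by linarith)
  rcases le_total qX (a - b) with hqc | hcq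
  · calc (qXA - qX * pA) ^ 2 / (qX * (1 - qX))
        ≤ (qX * pA) ^ 2 / (qX * (1 - qX)) := by
          refine div_le_div_of_nonneg_right (sq_le_sq' ?_ ?_) hden.le <;> linarith
      _ = pA ^ 2 * (qX / (1 - qX)) := by
          field_simp
      _ ≤ pA ^ 2 * ((a - b) / (1 - (a - b))) :=
          mul_le_mul_of_nonneg_left (div_one_sub_le_div_one_sub hqc (by linarith)) (sq_nonneg pA)
      _ = (a - b) * pA ^ 2 / (1 - (a - b)) := by ring
  · calc (qXA - qX * pA) ^ 2 / (qX * (1 - qX))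
        ≤ (a - b - qX * (1 - pA)) ^ 2 / (qX * (1 - qX)) := by
          refine div_le_div_of_nonneg_right (sq_le_sq' ?_ ?_) hden.le <;> linarith
      _ ≤ (a - b) * pA ^ 2 / (1 - (a - b)) :=
          sq_sub_mul_one_sub_div_le hpA0.le hc0 hc1 hcq hq1 (by linarith)

theorem chi_sq_negative_upper_bound (pA : ℝ) (hA : pA ∈ Set.Ioo (0:ℝ) 1)
    (a b : ℝ) (ha : a ∈ Set.Ioo (0:ℝ) 1) (hb0 : 0 ≤ b)
    (hneg : b ≤ a * pA) (hfeas : max 0 (a - (1 - pA)) ≤ b)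
    (qX qXA : ℝ) (hq0 : 0 < qX) (hq1 : qX < 1)
    (hqlo : max 0 (qX - (1 - pA)) ≤ qXA) (hqhi : qXA ≤ qX * pA)
    (hqb : qXA ≤ b) (hqline : qX ≤ qXA + (a - b)) :
    (qXA - qX * pA) ^ 2 / (qX * (1 - qX)) ≤ (a - b) * pA ^ 2 / (1 - (a - b)) :=
  chi_sq_negative_upper_bound_general pA hA a b ha hneg hfeas qX qXA hq0 hq1 hqlo hqhi hqline
end
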